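/- Let m and k be positive integers. Consider the assignment problem with couples with 4m hospitals H = {h₁,…,h_{2m}, h'₁,…,h'_{2m}}; 2m(2k+1) single interns, each of whose M-rows equals 1/(2m) at every h'_j and 0 at every h_j; and m(2k+1) couples, each of whose members' M-rows equal 1/(2m) at every h_j and 0 at every h'_j. Then every hospital has capacity 2k+1, and every convex combination {(λ^k, M^k)}_{k=1}^K of deterministic assignment matrices has approximation error at least 2/(2k+1). -/

import Mathlib

open Finset

/-- `(S, C, H, M)` (with `I`, `H` types of interns and hospitals) is an assignment problem
with couples: `S` is the set of single interns, `C` the set of couples (ordered pairs of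
members), every intern is a single or a member of a couple, members of couples are distinct
from each other, from the singles, and from members of other couples, `M ∈ [0,1]^{I×H}`,
each row of `M` sums to `1`, and both members of a couple have identical rows. -/
def IsCouplesProblem {I H : Type*} [Fintype I] [Fintype H]
    (S : Finset I) (C : Finset (I × I)) (M : I → H → ℝ) : Prop :=
  (∀ i : I, i ∈ S ∨ ∃ c ∈ C, i = c.1 ∨ i = c.2) ∧
  (∀ c ∈ C, c.1 ∉ S ∧ c.2 ∉ S ∧ c.1 ≠ c.2) ∧
  (∀ c ∈ C, ∀ c' ∈ C, c ≠ c' →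
    c.1 ≠ c'.1 ∧ c.1 ≠ c'.2 ∧ c.2 ≠ c'.1 ∧ c.2 ≠ c'.2) ∧
  (∀ (i : I) (h : H), 0 ≤ M i h ∧ M i h ≤ 1) ∧
  (∀ i : I, ∑ h : H, M i h = 1) ∧
  (∀ c ∈ C, ∀ h : H, M c.1 h = M c.2 h)

/-- `M'` is a deterministic assignment matrix with respect to the problem with couples `C`
and target matrix `M`: its entries are in `{0,1}`, rows sum to `1`, both members of each
couple have identical rows, and each column sum equals the capacity `q_h = ∑ i, M i h`. -/
def IsDeterministicAssignment {I H : Type*} [Fintype I] [Fintype H]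
    (C : Finset (I × I)) (M M' : I → H → ℝ) : Prop :=
  (∀ (i : I) (h : H), M' i h = 0 ∨ M' i h = 1) ∧
  (∀ i : I, ∑ h : H, M' i h = 1) ∧
  (∀ c ∈ C, ∀ h : H, M' c.1 h = M' c.2 h) ∧
  (∀ h : H, ∑ i : I, M' i h = ∑ i : I, M i h)


/-- Interns in the small-probabilities example: `2m(2k+1)` singles (the left summand) and
`m(2k+1)` couples, each couple having two members indexed by `Bool` (the right summand). -/
abbrev SPIntern (m k : ℕ) := Fin (2 * m * (2 * k + 1)) ⊕ (Fin (m * (2 * k + 1)) × Bool)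

/-- Hospitals in the small-probabilities example: `(true, j)` is `h_j` and `(false, j)` is
`h'_j`, for `j ∈ {1, …, 2m}`. -/
abbrev SPHospital (m : ℕ) := Bool × Fin (2 * m)

/-- The target matrix of the small-probabilities example: each single gets probability
`1/(2m)` at each `h'_j` (and `0` at each `h_j`), and each member of a couple gets
probability `1/(2m)` at each `h_j` (and `0` at each `h'_j`). -/
noncomputable def spM (m k : ℕ) : SPIntern m k → SPHospital m → ℝ
  | Sum.inl _, (b, _) => if b then 0 else 1 / (2 * m)
  | Sum.inr _, (b, _) => if b then 1 / (2 * m) else 0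

/-- The set of single interns of the small-probabilities example. -/
def spS (m k : ℕ) : Finset (SPIntern m k) := Finset.univ.image Sum.inl

/-- The set of couples of the small-probabilities example. -/
def spC (m k : ℕ) : Finset (SPIntern m k × SPIntern m k) :=
  Finset.univ.image fun j : Fin (m * (2 * k + 1)) =>
    (Sum.inr (j, false), Sum.inr (j, true))

/-!
Each hospital `h_j` has odd capacity `2k+1` and is open only to couples, who arrive in pairs,
so every deterministic assignment sends at least one single to each of the `2m` hospitals `h_j`.
Averaging over the convex combination and over the `2m(2k+1)` singles, some single receives
total probability `s ≥ 1/(2k+1)` at the `h_j`, where its target is `0`; since its row still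
sums to `1`, its total deviation from the target is at least `2s`.
-/

lemma sum_eq_natCast_of_zero_or_one {α : Type*} [Fintype α] {f : α → ℝ}
    (hf : ∀ a, f a = 0 ∨ f a = 1) : ∃ N : ℕ, ∑ a, f a = N := by
  refine ⟨#{a | f a = 1}, ?_⟩
  rw [← Finset.sum_boole]
  refine Finset.sum_congr rfl fun a _ => ?_
  rcases hf a with h | h <;> simp [h]

lemma one_le_sum_of_add_two_mul_sum_eq_odd {α β : Type*} [Fintype α] [Fintype β]
    {f : α → ℝ} {g : β → ℝ} (hf : ∀ a, f a = 0 ∨ f a = 1) (hg : ∀ b, g b = 0 ∨ g b = 1)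
    {n : ℕ} (h : ∑ a, f a + 2 * ∑ b, g b = 2 * n + 1) : 1 ≤ ∑ a, f a := by
  obtain ⟨N, hN⟩ := sum_eq_natCast_of_zero_or_one hf
  obtain ⟨N', hN'⟩ := sum_eq_natCast_of_zero_or_one hg
  rw [hN, hN'] at h
  have : N + 2 * N' = 2 * n + 1 := by exact_mod_cast h
  rw [hN]
  exact_mod_cast (by omega : 1 ≤ N)

/-- On `s` the deviation is `q`; off `s` it is at least `p - q`, whose sum is `∑ i ∈ s, q i`
because `p` and `q` have the same total. -/
lemma two_mul_sum_le_sum_abs_sub {ι : Type*} [Fintype ι] [DecidableEq ι] {p q : ι → ℝ}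
    {s : Finset ι} (hp : ∀ i ∈ s, p i = 0) (hpq : ∑ i, p i = ∑ i, q i) :
    2 * ∑ i ∈ s, q i ≤ ∑ i, |p i - q i| := by
  have hp' : ∑ i ∈ sᶜ, p i = ∑ i, p i := by
    rw [← Finset.sum_add_sum_compl s p, Finset.sum_eq_zero hp, zero_add]
  have hon : ∑ i ∈ s, q i ≤ ∑ i ∈ s, |p i - q i| :=
    Finset.sum_le_sum fun i hi => by rw [hp i hi, zero_sub, abs_neg]; exact le_abs_self _
  have hoff : ∑ i ∈ sᶜ, (p i - q i) ≤ ∑ i ∈ sᶜ, |p i - q i| :=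
    Finset.sum_le_sum fun i _ => le_abs_self _
  rw [Finset.sum_sub_distrib, hp', hpq, ← Finset.sum_add_sum_compl s q] at hoff
  rw [← Finset.sum_add_sum_compl s fun i => |p i - q i|]
  linarith

lemma le_sum_mul_of_le {K : Type*} [Fintype K] {lam a : K → ℝ} {c : ℝ}
    (hlam : ∀ j, 0 ≤ lam j) (hsum : ∑ j, lam j = 1) (ha : ∀ j, c ≤ a j) :
    c ≤ ∑ j, lam j * a j :=
  calc c = ∑ j, lam j * c := by rw [← Finset.sum_mul, hsum, one_mul]
    _ ≤ ∑ j, lam j * a j := Finset.sum_le_sum fun j _ => mul_le_mul_of_nonneg_left (ha j) (hlam j)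

lemma sum_sum_mul_comm {K ι : Type*} [Fintype K] (s : Finset ι) (lam : K → ℝ)
    (F : K → ι → ℝ) : ∑ x ∈ s, ∑ j, lam j * F j x = ∑ j, lam j * ∑ x ∈ s, F j x := by
  rw [Finset.sum_comm]
  simp only [Finset.mul_sum]

section SmallProbabilities

variable {m k : ℕ}

lemma sum_spM_eq_one (hm : 0 < m) (i : SPIntern m k) : ∑ h, spM m k i h = 1 := by
  have hm0 : (m : ℝ) ≠ 0 := by positivity
  rcases i with a | p <;> simp [spM, Fintype.sum_prod_type] <;> field_simp

lemma isCouplesProblem_spS_spC_spM (hm : 0 < m) :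
    IsCouplesProblem (spS m k) (spC m k) (spM m k) := by
  have hm' : (1 : ℝ) ≤ m := by exact_mod_cast hm
  have hinv : (m : ℝ)⁻¹ * 2⁻¹ ≤ 1 := by
    rw [← mul_inv, inv_le_one₀ (by positivity)]; linarith
  refine ⟨?_, ?_, ?_, ?_, ?_, ?_⟩
  · rintro (a | ⟨p, b⟩)
    · exact Or.inl (by simp [spS])
    · exact Or.inr ⟨_, Finset.mem_image_of_mem _ (Finset.mem_univ p), by cases b <;> simp⟩
  · simp [spC, spS]
  · simp only [spC, Finset.mem_image, Finset.mem_univ, true_and]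
    rintro _ ⟨p, rfl⟩ _ ⟨p', rfl⟩ hne
    have : p ≠ p' := by rintro rfl; exact hne rfl
    simp [this]
  · rintro (a | p) ⟨_ | _, t⟩ <;> simp [spM, hinv]
  · exact sum_spM_eq_one hm
  · simp only [spC, Finset.mem_image, Finset.mem_univ, true_and]
    rintro _ ⟨p, rfl⟩ h
    rfl

lemma sum_spM_eq (hm : 0 < m) (h : SPHospital m) :
    ∑ i : SPIntern m k, spM m k i h = 2 * k + 1 := by
  have hm0 : (m : ℝ) ≠ 0 := by positivity
  obtain ⟨_ | _, t⟩ := h <;>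
    simp [spM, Fintype.sum_sum_type, Fintype.card_prod] <;> field_simp

lemma one_le_sum_singles_of_isDeterministicAssignment (hm : 0 < m)
    {M' : SPIntern m k → SPHospital m → ℝ}
    (hM' : IsDeterministicAssignment (spC m k) (spM m k) M') (t : Fin (2 * m)) : 1 ≤ ∑ i, M' (Sum.inl i) (true, t) := by
  obtain ⟨h01, -, hcouple, hcap⟩ := hM'
  have hpair : ∀ p,
      ∑ b : Bool, M' (Sum.inr (p, b)) (true, t) = 2 * M' (Sum.inr (p, true)) (true, t) :=
    fun p => by
      rw [Fintype.sum_bool, ← hcouple _ (Finset.mem_image_of_mem _ (Finset.mem_univ p))]; ring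
  have hcol := hcap (true, t)
  rw [sum_spM_eq hm, Fintype.sum_sum_type, Fintype.sum_prod_type,
    Finset.sum_congr rfl fun p _ => hpair p, ← Finset.mul_sum] at hcol
  exact one_le_sum_of_add_two_mul_sum_eq_odd (fun _ => h01 _ _) (fun _ => h01 _ _) hcol

lemma two_mul_le_sum_singles_of_isDeterministicAssignment (hm : 0 < m)
    {M' : SPIntern m k → SPHospital m → ℝ}
    (hM' : IsDeterministicAssignment (spC m k) (spM m k) M') :
    2 * (m : ℝ) ≤ ∑ i, ∑ t, M' (Sum.inl i) (true, t) :=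
  calc 2 * (m : ℝ) = ∑ _t : Fin (2 * m), 1 := by simp
    _ ≤ ∑ t, ∑ i, M' (Sum.inl i) (true, t) :=
      Finset.sum_le_sum fun t _ => one_le_sum_singles_of_isDeterministicAssignment hm hM' t
    _ = _ := Finset.sum_comm

end SmallProbabilities

theorem lower_bound_small_probabilities_general (m k : ℕ) (hm : 0 < m) :
    IsCouplesProblem (spS m k) (spC m k) (spM m k) ∧
    (∀ h : SPHospital m, ∑ i : SPIntern m k, spM m k i h = 2 * k + 1) ∧
    ∀ (K : ℕ) (lam : Fin K → ℝ) (Ms : Fin K → SPIntern m k → SPHospital m → ℝ),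
      (∀ j, 0 ≤ lam j) → ∑ j, lam j = 1 →
      (∀ j, IsDeterministicAssignment (spC m k) (spM m k) (Ms j)) →
      ∃ i : SPIntern m k,
        2 / (2 * (k : ℝ) + 1) ≤ ∑ h : SPHospital m, |spM m k i h - ∑ j, lam j * Ms j i h| := by
  refine ⟨isCouplesProblem_spS_spC_spM hm, sum_spM_eq hm, fun K lam Ms hlam hsum hMs => ?_⟩
  have hsingles : ∑ _i : Fin (2 * m * (2 * k + 1)), 1 / (2 * (k : ℝ) + 1) ≤
      ∑ i, ∑ t, ∑ j, lam j * Ms j (Sum.inl i) (true, t) :=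
    calc ∑ _i : Fin (2 * m * (2 * k + 1)), 1 / (2 * (k : ℝ) + 1) = 2 * m := by
          rw [Finset.sum_const, Finset.card_univ, Fintype.card_fin, nsmul_eq_mul]
          push_cast
          field_simp
      _ ≤ ∑ j, lam j * ∑ i, ∑ t, Ms j (Sum.inl i) (true, t) := le_sum_mul_of_le hlam hsum
          fun j => two_mul_le_sum_singles_of_isDeterministicAssignment hm (hMs j)
      _ = _ := by simp only [sum_sum_mul_comm]
  obtain ⟨i, -, hi⟩ := Finset.exists_le_of_sum_le
    ⟨⟨0, by positivity⟩, Finset.mem_univ _⟩ hsingles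
  refine ⟨Sum.inl i, le_trans ?_ (two_mul_sum_le_sum_abs_sub (s := {true} ×ˢ Finset.univ) ?_ ?_)⟩
  · rw [Finset.sum_product, Finset.sum_singleton, ← mul_one_div]
    gcongr
  · simp [spM]
  · rw [sum_spM_eq_one hm, sum_sum_mul_comm]
    simp only [(hMs _).2.1, mul_one, hsum]

/-- in the small-probabilities example (for positive `m`, `k`), the
problem is a valid assignment problem with couples, every hospital has capacity `2k+1`,
and every convex combination of deterministic assignment matrices has approximation error
at least `2 / (2k + 1)`. -/
theorem lower_bound_small_probabilities (m k : ℕ) (hm : 0 < m) (hk : 0 < k) :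
    IsCouplesProblem (spS m k) (spC m k) (spM m k) ∧
    (∀ h : SPHospital m, ∑ i : SPIntern m k, spM m k i h = 2 * k + 1) ∧
    ∀ (K : ℕ) (lam : Fin K → ℝ) (Ms : Fin K → SPIntern m k → SPHospital m → ℝ),
      (∀ j, 0 ≤ lam j) → ∑ j, lam j = 1 →
      (∀ j, IsDeterministicAssignment (spC m k) (spM m k) (Ms j)) →
      ∃ i : SPIntern m k,
        2 / (2 * (k : ℝ) + 1) ≤ ∑ h : SPHospital m, |spM m k i h - ∑ j, lam j * Ms j i h| :=
  lower_bound_small_probabilities_general m k hm
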